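/- arXiv:math/0509457 — 4 statements merged into one kernel-verified Lean document; each statement's English description precedes it below -/
import Mathlib

section
/- Let r be a natural number and let t : Fin r → ℕ be a family of positive integers, regarded as a multiset T of parts. Then in ℤ⟦X⟧, for every natural number s, the coefficient of X^s in (1 - X)⁻¹ * ∏_{i : Fin r} (1 - X^(t i))⁻¹ equals ∑_{n=0}^{s} P_T(n), the total number of partitions of all integers n with 0 ≤ n ≤ s into parts from the multiset T. -/
/-!
In `R⟦X⟧` the inverse of `1 - X ^ k` is the expansion `∑ₙ X^(k n)` of the geometric series
`∑ₙ Xⁿ = (1 - X)⁻¹`, whose `n`-th coefficient is `1` when `k ∣ n` and `0` otherwise.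
Hence the `n`-th coefficient of `∏ᵢ (1 - X ^ tᵢ)⁻¹` counts the decompositions `n = ∑ᵢ lᵢ` with
`tᵢ ∣ lᵢ`, i.e. the tuples `a` with `∑ᵢ aᵢ tᵢ = n`, and multiplying by `(1 - X)⁻¹` turns
coefficients into their partial sums.
-/

open PowerSeries Finset

theorem Ring.inverse_eq_of_mul_eq_one {M : Type*} [CommMonoidWithZero M] {x y : M}
    (h : x * y = 1) : Ring.inverse x = y := by
  rw [← Ring.inverse_mul_cancel_left x y (.of_mul_eq_one y h), h, mul_one]

theorem Nat.card_setOf_sum_mul_eq_card_filter_dvd {ι : Type*} [Fintype ι] [DecidableEq ι]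
    {t : ι → ℕ} (ht : ∀ i, t i ≠ 0) (n : ℕ) :
    Nat.card {a : ι → ℕ | ∑ i, a i * t i = n} =
      #{l ∈ finsuppAntidiag univ n | ∀ i, t i ∣ l i} := by
  set g : (ι → ℕ) → (ι →₀ ℕ) := fun a => Finsupp.equivFunOnFinite.symm (a * t)
  have hg : g.Injective := fun a b hab => funext fun i =>
    Nat.eq_of_mul_eq_mul_right (Nat.pos_of_ne_zero (ht i)) (DFunLike.congr_fun hab i)
  rw [Nat.card_coe_set_eq, ← Set.ncard_image_of_injective _ hg, ← Set.ncard_coe_finset]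
  congr 1
  ext l
  simp only [Set.mem_image, Set.mem_ofPred_eq, coe_filter, mem_finsuppAntidiag, subset_univ,
    and_true]
  constructor
  · rintro ⟨a, rfl, rfl⟩
    simp [g]
  · rintro ⟨hsum, hdvd⟩
    refine ⟨fun i => l i / t i, ?_, ?_⟩
    · simp_rw [Nat.div_mul_cancel (hdvd _)]
      exact hsum
    · ext i
      simp [g, Nat.div_mul_cancel (hdvd i)]

namespace PowerSeries

variable {R : Type*} [CommRing R]

theorem coeff_mul_mk_one (f : R⟦X⟧) (s : ℕ) :
    coeff s (f * mk 1) = ∑ n ∈ range (s + 1), coeff n f := by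
  simp [coeff_mul, Nat.sum_antidiagonal_eq_sum_range_succ_mk]

theorem one_sub_X_pow_mul_expand_mk_one {k : ℕ} (hk : k ≠ 0) :
    (1 - X ^ k) * expand k hk (mk 1 : R⟦X⟧) = 1 := by
  rw [← expand_X k hk, ← map_one (expand k hk), ← map_sub, ← map_mul, mul_comm,
    mk_one_mul_one_sub_eq_one, map_one]

theorem coeff_expand_mk_one {k : ℕ} (hk : k ≠ 0) (n : ℕ) :
    coeff n (expand k hk (mk 1 : R⟦X⟧)) = if k ∣ n then 1 else 0 := by
  simp [coeff_expand]

theorem coeff_prod_expand_mk_one {ι : Type*} [Fintype ι] {t : ι → ℕ} (ht : ∀ i, t i ≠ 0)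
    (n : ℕ) :
    coeff n (∏ i, expand (t i) (ht i) (mk 1 : R⟦X⟧)) =
      Nat.card {a : ι → ℕ | ∑ i, a i * t i = n} := by
  classical
  simp only [coeff_prod, coeff_expand_mk_one, Fintype.prod_boole]
  rw [Nat.card_setOf_sum_mul_eq_card_filter_dvd ht, natCast_card_filter]

end PowerSeries

/-- The coefficient of `X^s` in `(1 - X)⁻¹ * ∏ i, (1 - X^(t i))⁻¹` (inverses via `Ring.inverse`
in `ℤ⟦X⟧`) is `∑_{n=0}^{s} P_T(n)`, the total number of partitions of all integers `0 ≤ n ≤ s`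
into parts from the multiset `T = [t 0, …, t (r-1)]` of positive parts. -/
theorem coeff_cumulative_partition_gf
    (r : ℕ) (t : Fin r → ℕ) (ht : ∀ i, 1 ≤ t i) (s : ℕ) :
    PowerSeries.coeff (R := ℤ) s
        (Ring.inverse (1 - (X : ℤ⟦X⟧)) * ∏ i : Fin r, Ring.inverse (1 - (X : ℤ⟦X⟧) ^ (t i)))
      = (∑ n ∈ Finset.range (s + 1),
          (Nat.card {a : Fin r → ℕ | ∑ i, a i * t i = n} : ℤ)) := by
  have ht₀ (i : Fin r) : t i ≠ 0 := Nat.one_le_iff_ne_zero.mp (ht i)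
  rw [Ring.inverse_eq_of_mul_eq_one ((mul_comm _ _).trans (mk_one_mul_one_sub_eq_one ℤ)),
    prod_congr rfl fun i _ =>
      Ring.inverse_eq_of_mul_eq_one (one_sub_X_pow_mul_expand_mk_one (ht₀ i)),
    mul_comm, coeff_mul_mk_one]
  simp only [coeff_prod_expand_mk_one]
end

section
/- Let r ≥ 1 and let ℓ ≥ 2r + 2 be an even natural number. Then the number of tuples a : Fin r → ℕ with 2·(∑_{i=1}^{r} a_i) ≤ ℓ - 2r - 2 equals the binomial coefficient C(ℓ/2 - 1, r). (Combinatorially, this is the rank of the pre-modular category C(g(C_r), q, ℓ) for ℓ even: the multiset of parts is [2, …, 2] (r twos) and ℓ₀ = 2r + 2.) -/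
lemma card_toMultiset_eq (r : ℕ) (b : Fin (r + 1) → ℕ) :
    Multiset.card (Multiset.toFinsupp.symm (Finsupp.equivFunOnFinite.symm b)) = ∑ i, b i := by
  rw [← Multiset.sum_count_eq_card (s := (Finset.univ : Finset (Fin (r + 1)))) (fun a _ => Finset.mem_univ a)]
  exact Finset.sum_congr rfl fun i _ => by simp

/-- Tuples with bounded sum correspond to multisets via stars and bars. -/
noncomputable def sumLeEquivSym (r k : ℕ) :
    {a : Fin r → ℕ // ∑ i, a i ≤ k} ≃ Sym (Fin (r + 1)) k :=
  -- first pad with a slack variable to make the sum equal to k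
  (⟨fun a => ⟨Fin.cons (k - ∑ i, a.1 i) a.1, by
      rw [Fin.sum_cons]; omega⟩,
    fun b => ⟨fun i => b.1 i.succ, by
      have := b.2; rw [Fin.sum_univ_succ] at this
      show (∑ i : Fin r, (b : Fin (r + 1) → ℕ) i.succ) ≤ k
      omega⟩,
    fun a => by ext i; simp,
    fun b => by
      ext i
      refine Fin.cases ?_ (fun j => by simp) i
      have := b.2
      rw [Fin.sum_univ_succ] at this
      simp only [Fin.cons_zero]
      show k - (∑ i : Fin r, (b : Fin (r + 1) → ℕ) i.succ) = (b : Fin (r + 1) → ℕ) 0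
      omega⟩ : {a : Fin r → ℕ // ∑ i, a i ≤ k} ≃ {b : Fin (r + 1) → ℕ // ∑ i, b i = k}).trans <|
  -- then pass to multisets via counts
  ((Finsupp.equivFunOnFinite.symm.trans Multiset.toFinsupp.symm.toEquiv).subtypeEquiv
    (fun b => by
      simp only [Equiv.trans_apply]
      constructor
      · intro h
        show Multiset.card (Multiset.toFinsupp.symm (Finsupp.equivFunOnFinite.symm b)) = k
        rw [card_toMultiset_eq, h]
      · intro h
        have : Multiset.card (Multiset.toFinsupp.symm (Finsupp.equivFunOnFinite.symm b)) = k := h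
        rw [card_toMultiset_eq] at this
        exact this))

theorem card_sum_le (r k : ℕ) :
    Nat.card {a : Fin r → ℕ // ∑ i, a i ≤ k} = (k + r).choose r := by
  rw [Nat.card_congr (sumLeEquivSym r k), Nat.card_eq_fintype_card,
    Sym.card_sym_eq_choose, Fintype.card_fin]
  have h1 : r + 1 + k - 1 = k + r := by omega
  rw [h1, ← Nat.choose_symm (show k ≤ k + r by omega)]
  congr 1
  omega

/-- Rank of `C(g(C_r), q, ℓ)` for even `ℓ`: for `r ≥ 1` and even `ℓ ≥ 2r + 2`, the number of
tuples `a : Fin r → ℕ` with `2 * ∑ i, a i ≤ ℓ - 2r - 2` equals `C(ℓ/2 - 1, r)`. -/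
theorem rank_C_r_even (r ℓ : ℕ) (hr : 1 ≤ r) (hℓeven : Even ℓ) (hℓ : 2 * r + 2 ≤ ℓ) :
    Nat.card {a : Fin r → ℕ | 2 * ∑ i, a i ≤ ℓ - 2 * r - 2} = (ℓ / 2 - 1).choose r := by
  obtain ⟨m, hm⟩ := hℓeven
  set k := ℓ / 2 - r - 1 with hk
  have h1 : ℓ - 2 * r - 2 = 2 * k := by omega
  have h2 : ℓ / 2 - 1 = k + r := by omega
  rw [h2, ← card_sum_le r k]
  apply Nat.card_congr
  apply Equiv.subtypeEquiv (Equiv.refl _)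
  intro a
  simp only [Set.mem_setOf_eq, Equiv.refl_apply, h1]
  omega
end

section
/- Let r ≥ 1 and let ℓ be a natural number with ℓ ≥ r + 1 and gcd(ℓ, r + 1) = 1. Then (r + 1) times the number of tuples a : Fin r → ℕ satisfying both ∑_{i=1}^{r} a_i ≤ ℓ - r - 1 and ∑_{i=1}^{r} i · a_i ≡ 0 (mod r + 1) equals the binomial coefficient C(ℓ-1, r). In particular the number of such tuples is exactly 1/(r+1) times the total number of tuples a : Fin r → ℕ with ∑_i a_i ≤ ℓ - r - 1. (This is the combinatorial content of the paper's Remark: for g of Lie type A_r with gcd(ℓ, r+1) = 1, the simple objects labeled by integer weights — those λ = ∑ a_i λ_i with ∑ i·a_i ≡ 0 mod (r+1) — form a modular subcategory whose rank is 1/(r+1) times the rank of the full category.) -/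
/-!
Appending the slack `m - ∑ a` (with `m = ℓ - r - 1`) as a zeroth coordinate turns the labels
into the tuples `b : Fin (r + 1) → ℕ` with `∑ b = m`, of which there are `C(ℓ - 1, r)` by stars
and bars, and turns integrality into the vanishing of the cyclic weight `∑ i * b i` in
`ZMod (r + 1)`. Rotating `b` cyclically preserves `∑ b` and adds `m` to the weight. As `m ≡ ℓ`
is a unit modulo `r + 1`, its multiples exhaust `ZMod (r + 1)`, so iterated rotations carry
the zero weight class bijectively onto each of the `r + 1` classes.
-/

theorem Nat.card_sum_eq_choose (ι : Type*) [Fintype ι] (m : ℕ) :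
    Nat.card {b : ι → ℕ // ∑ i, b i = m} = (Fintype.card ι + m - 1).choose m := by
  classical
  rw [← Nat.card_congr (Sym.equivNatSumOfFintype ι m), Nat.card_eq_fintype_card,
    Sym.card_sym_eq_choose]

section Shift

variable {α G : Type*} [AddGroup G] (f : α → G) (e : α ≃ α) {c : G}

theorem Nat.card_fiber_eq_of_shift (hf : ∀ a, f (e a) = f a + c)
    (hc : ∀ x, x ∈ AddSubgroup.zmultiples c) (x : G) :
    Nat.card {a // f a = x} = Nat.card {a // f a = 0} := by
  have step (y : G) : Nat.card {a // f a = y + c} = Nat.card {a // f a = y} :=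
    (Nat.card_congr (e.subtypeEquiv fun a => by rw [hf, add_left_inj])).symm
  obtain ⟨k, rfl⟩ := AddSubgroup.mem_zmultiples_iff.mp (hc x)
  induction k using Int.induction_on with
  | zero => rw [zero_zsmul]
  | succ k ih => rw [add_zsmul, one_zsmul, step, ih]
  | pred k ih => rw [← ih, ← step, sub_one_zsmul, neg_add_cancel_right]

theorem Nat.card_mul_card_fiber_zero_of_shift [Fintype G] [Finite α]
    (hf : ∀ a, f (e a) = f a + c) (hc : ∀ x, x ∈ AddSubgroup.zmultiples c) :
    Nat.card G * Nat.card {a // f a = 0} = Nat.card α := by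
  rw [← Nat.card_congr (Equiv.sigmaFiberEquiv f), Nat.card_sigma,
    Finset.sum_congr rfl fun x _ => Nat.card_fiber_eq_of_shift f e hf hc x, Finset.sum_const,
    Finset.card_univ, smul_eq_mul, Nat.card_eq_fintype_card]

end Shift

theorem ZMod.mem_zmultiples_of_isUnit {n : ℕ} {c : ZMod n} (hc : IsUnit c) (x : ZMod n) :
    x ∈ AddSubgroup.zmultiples c :=
  AddSubgroup.mem_zmultiples_iff.mpr ⟨(x * ↑hc.unit⁻¹).cast, by
    rw [zsmul_eq_mul, ZMod.intCast_zmod_cast, mul_assoc, hc.val_inv_mul, mul_one]⟩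

def cyclicWeight {N : ℕ} (b : Fin N → ℕ) : ZMod N :=
  ∑ i : Fin N, ((i : ℕ) : ZMod N) * b i

theorem ZMod.natCast_finVal_add_one {N : ℕ} [NeZero N] (i : Fin N) :
    (((i + 1 : Fin N) : ℕ) : ZMod N) = ((i : ℕ) : ZMod N) + 1 := by
  rw [Fin.val_add, ZMod.natCast_mod, Nat.cast_add, Fin.val_one', ZMod.natCast_mod, Nat.cast_one]

theorem cyclicWeight_comp_sub_one {N : ℕ} [NeZero N] (b : Fin N → ℕ) :
    cyclicWeight (fun i => b (i - 1)) = cyclicWeight b + ((∑ i, b i : ℕ) : ZMod N) := by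
  rw [cyclicWeight, ← Equiv.sum_comp (Equiv.addRight (1 : Fin N)), cyclicWeight, Nat.cast_sum,
    ← Finset.sum_add_distrib]
  refine Finset.sum_congr rfl fun i _ => ?_
  simp only [Equiv.coe_addRight, add_sub_cancel_right, ZMod.natCast_finVal_add_one]
  ring

theorem cyclicWeight_eq_sum_tail {r : ℕ} (b : Fin (r + 1) → ℕ) :
    cyclicWeight b = ((∑ i : Fin r, ((i : ℕ) + 1) * Fin.tail b i : ℕ) : ZMod (r + 1)) := by
  rw [cyclicWeight, Fin.sum_univ_succ]
  push_cast
  simp [Fin.tail]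

theorem Nat.card_sum_le_eq_card_sum_eq (r m : ℕ) (p : (Fin r → ℕ) → Prop) :
    Nat.card {a : Fin r → ℕ | ∑ i, a i ≤ m ∧ p a}
      = Nat.card {b : Fin (r + 1) → ℕ // ∑ i, b i = m ∧ p (Fin.tail b)} :=
  Nat.card_congr
    { toFun := fun a => ⟨Fin.cons (m - ∑ i, a.1 i) a.1, by
        simpa [Fin.sum_univ_succ, Fin.tail_cons] using ⟨Nat.sub_add_cancel a.2.1, a.2.2⟩⟩
      invFun := fun b => ⟨Fin.tail b.1, by
        have hsum := b.2.1
        rw [Fin.sum_univ_succ] at hsum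
        exact ⟨by simp only [Fin.tail]; omega, b.2.2⟩⟩
      left_inv := fun a => by ext; simp
      right_inv := fun b => by
        have hsum := b.2.1
        rw [Fin.sum_univ_succ] at hsum
        ext1
        simp only [Fin.tail, show m - ∑ i : Fin r, b.1 i.succ = b.1 0 by omega]
        exact Fin.cons_self_tail b.1 }

theorem card_mul_card_cyclicWeight_eq_zero {N m : ℕ} [NeZero N] (hm : IsUnit (m : ZMod N)) :
    N * Nat.card {b : {b : Fin N → ℕ // ∑ i, b i = m} // cyclicWeight b.1 = 0}
      = (N + m - 1).choose m := by
  have : Finite {b : Fin N → ℕ // ∑ i, b i = m} := .of_equiv _ (Sym.equivNatSumOfFintype _ m)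
  let rotate : {b : Fin N → ℕ // ∑ i, b i = m} ≃ {b : Fin N → ℕ // ∑ i, b i = m} :=
    ((Equiv.subRight (1 : Fin N)).symm.arrowCongr (Equiv.refl ℕ)).subtypeEquiv fun b => by
      rw [← Equiv.sum_comp (Equiv.subRight (1 : Fin N))]
      rfl
  have hshift (b : {b : Fin N → ℕ // ∑ i, b i = m}) :
      cyclicWeight (rotate b).1 = cyclicWeight b.1 + m := by
    have h := cyclicWeight_comp_sub_one b.1
    rwa [b.2] at h
  have h := Nat.card_mul_card_fiber_zero_of_shift (cyclicWeight ·.1) rotate hshift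
    (ZMod.mem_zmultiples_of_isUnit hm)
  rwa [Nat.card_zmod, Nat.card_sum_eq_choose, Fintype.card_fin] at h

theorem rank_A_r_integer_weights_general (r ℓ : ℕ) (hℓ : r + 1 ≤ ℓ)
    (hgcd : Nat.gcd ℓ (r + 1) = 1) :
    (r + 1) * Nat.card {a : Fin r → ℕ |
        (∑ i, a i ≤ ℓ - r - 1) ∧ (∑ i : Fin r, ((i : ℕ) + 1) * a i) % (r + 1) = 0}
      = (ℓ - 1).choose r := by
  have hunit : IsUnit ((ℓ - r - 1 : ℕ) : ZMod (r + 1)) := by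
    rw [Nat.sub_sub, Nat.cast_sub hℓ, ZMod.natCast_self, sub_zero, ZMod.isUnit_iff_coprime]
    exact hgcd
  have hchoose : (r + 1 + (ℓ - r - 1) - 1).choose (ℓ - r - 1) = (ℓ - 1).choose r := by
    rw [show r + 1 + (ℓ - r - 1) - 1 = ℓ - 1 by omega, show ℓ - r - 1 = ℓ - 1 - r by omega,
      Nat.choose_symm (by omega)]
  have hintegral (b : Fin (r + 1) → ℕ) :
      cyclicWeight b = 0 ↔ (∑ i : Fin r, ((i : ℕ) + 1) * Fin.tail b i) % (r + 1) = 0 := by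
    rw [cyclicWeight_eq_sum_tail, ZMod.natCast_eq_zero_iff, Nat.dvd_iff_mod_eq_zero]
  rw [← hchoose, ← card_mul_card_cyclicWeight_eq_zero hunit,
    Nat.card_sum_le_eq_card_sum_eq r _ fun a => (∑ i : Fin r, ((i : ℕ) + 1) * a i) % (r + 1) = 0]
  exact congrArg _ (Nat.card_congr ((Equiv.subtypeSubtypeEquivSubtypeInter _ _).trans
    (Equiv.subtypeEquivRight fun b => and_congr_right fun _ => hintegral b)).symm)

/-- The Remark for Lie type `A_r`: if `gcd(ℓ, r+1) = 1` and `ℓ ≥ r + 1`, then `(r+1)` times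
the number of tuples `a : Fin r → ℕ` with `∑ i, a i ≤ ℓ - r - 1` and
`∑ i, (i+1) * a i ≡ 0 (mod r+1)` (the integer-weight labels) equals `C(ℓ-1, r)`,
the total number of labels. -/
theorem rank_A_r_integer_weights (r ℓ : ℕ) (hr : 1 ≤ r) (hℓ : r + 1 ≤ ℓ)
    (hgcd : Nat.gcd ℓ (r + 1) = 1) :
    (r + 1) * Nat.card {a : Fin r → ℕ |
        (∑ i, a i ≤ ℓ - r - 1) ∧ (∑ i : Fin r, ((i : ℕ) + 1) * a i) % (r + 1) = 0}
      = (ℓ - 1).choose r :=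
  rank_A_r_integer_weights_general r ℓ hℓ hgcd
end

section
/- Let r ≥ 2 and let s be an odd natural number. Then twice the number of tuples a : Fin r → ℕ satisfying 2·(a_1 + ⋯ + a_{r-1}) + a_r ≤ s with a_r even equals the total number of tuples a : Fin r → ℕ with 2·(a_1 + ⋯ + a_{r-1}) + a_r ≤ s. (This is the combinatorial content of the paper's Remark: for g of Lie type B_r and ℓ odd, the simple objects labeled by integer (non-spin) weights — those whose spin coordinate a_r is even — form a pre-modular subcategory with rank exactly half that of the original category.) -/
open Finset in
theorem rank_aux (r s : ℕ) (hs : Odd s) (j : Fin r) (hjv : (j : ℕ) = r - 1) :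
    2 * Nat.card {a : Fin r → ℕ |
        (2 * ∑ i ∈ Finset.univ.filter (fun i : Fin r => (i : ℕ) < r - 1), a i + a j ≤ s)
          ∧ Even (a j)}
      = Nat.card {a : Fin r → ℕ |
          2 * ∑ i ∈ Finset.univ.filter (fun i : Fin r => (i : ℕ) < r - 1), a i + a j ≤ s} := by
  set T : (Fin r → ℕ) → ℕ :=
    fun a => ∑ i ∈ Finset.univ.filter (fun i : Fin r => (i : ℕ) < r - 1), a i with hT
  set S : Set (Fin r → ℕ) := {a | 2 * T a + a j ≤ s} with hS
  set E : Set (Fin r → ℕ) := {a | 2 * T a + a j ≤ s ∧ Even (a j)} with hE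
  set O : Set (Fin r → ℕ) := {a | 2 * T a + a j ≤ s ∧ Odd (a j)} with hO
  have hjmem : j ∉ Finset.univ.filter (fun i : Fin r => (i : ℕ) < r - 1) := by
    simp [hjv]
  have hTupd : ∀ (a : Fin r → ℕ) (v : ℕ), T (Function.update a j v) = T a := by
    intro a v
    refine Finset.sum_congr rfl fun i hi => ?_
    have : i ≠ j := fun h => hjmem (h ▸ hi)
    simp [Function.update_of_ne this]
  -- finiteness
  have hSfin : S.Finite := by
    have hbig : (Set.pi Set.univ (fun _ : Fin r => Set.Iic s)).Finite :=
      Set.Finite.pi (fun _ => Set.finite_Iic s)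
    refine hbig.subset ?_
    intro a ha i _
    simp only [Set.mem_Iic]
    have ha' : 2 * T a + a j ≤ s := ha
    by_cases hi : (i : ℕ) < r - 1
    · have : a i ≤ T a := Finset.single_le_sum (f := a) (fun _ _ => Nat.zero_le _)
        (by simp [hi])
      omega
    · have : i = j := by
        apply Fin.ext
        have := i.isLt
        omega
      rw [this]; omega
  have hEfin : E.Finite := hSfin.subset fun a ha => ha.1
  have hOfin : O.Finite := hSfin.subset fun a ha => ha.1
  -- bijection E ≃ O
  have hcard : Nat.card E = Nat.card O := by
    refine Nat.card_congr ⟨fun a => ⟨Function.update a.1 j (a.1 j + 1), ?_⟩,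
      fun a => ⟨Function.update a.1 j (a.1 j - 1), ?_⟩, ?_, ?_⟩
    · obtain ⟨a, ha, hev⟩ := a
      obtain ⟨k, hk⟩ := hev
      obtain ⟨m, hm⟩ := hs
      constructor
      · rw [hTupd]; simp only [Function.update_self]; omega
      · simp only [Function.update_self]; exact ⟨k, by omega⟩
    · obtain ⟨a, ha, hodd⟩ := a
      obtain ⟨k, hk⟩ := hodd
      constructor
      · rw [hTupd]; simp only [Function.update_self]; omega
      · simp only [Function.update_self]; exact ⟨k, by omega⟩
    · rintro ⟨a, ha, hev⟩
      apply Subtype.ext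
      funext i
      by_cases hi : i = j
      · subst hi; simp
      · simp [Function.update_of_ne hi]
    · rintro ⟨a, ha, hodd⟩
      apply Subtype.ext
      funext i
      by_cases hi : i = j
      · subst hi
        obtain ⟨k, hk⟩ := hodd
        simp [Function.update_self]; omega
      · simp [Function.update_of_ne hi]
  -- S = E ∪ O, disjoint
  have hunion : S = E ∪ O := by
    ext a
    simp only [hS, hE, hO, Set.mem_setOf_eq, Set.mem_union]
    constructor
    · intro h
      rcases Nat.even_or_odd (a j) with h' | h'
      · exact Or.inl ⟨h, h'⟩
      · exact Or.inr ⟨h, h'⟩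
    · rintro (⟨h, _⟩ | ⟨h, _⟩) <;> exact h
  have hdisj : Disjoint E O := by
    rw [Set.disjoint_iff]
    rintro a ⟨⟨_, hev⟩, ⟨_, hodd⟩⟩
    exact absurd hev ((Nat.not_even_iff_odd.mpr hodd))
  have : Nat.card S = Nat.card E + Nat.card O := by
    rw [Nat.card_coe_set_eq, Nat.card_coe_set_eq, Nat.card_coe_set_eq,
      hunion, Set.ncard_union_eq hdisj hEfin hOfin]
  omega

/-- The Remark for Lie type `B_r`, `ℓ` odd: for `r ≥ 2` and `s` odd, twice the number of
tuples `a : Fin r → ℕ` with `2(a_1 + ⋯ + a_{r-1}) + a_r ≤ s` and spin coordinate `a_r` even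
equals the total number of tuples `a : Fin r → ℕ` with `2(a_1 + ⋯ + a_{r-1}) + a_r ≤ s`. -/
theorem rank_B_r_nonspin (r s : ℕ) (hr : 2 ≤ r) (hs : Odd s) :
    2 * Nat.card {a : Fin r → ℕ |
        (2 * ∑ i ∈ Finset.univ.filter (fun i : Fin r => (i : ℕ) < r - 1), a i
            + a ⟨r - 1, by omega⟩ ≤ s) ∧ Even (a ⟨r - 1, by omega⟩)}
      = Nat.card {a : Fin r → ℕ |
          2 * ∑ i ∈ Finset.univ.filter (fun i : Fin r => (i : ℕ) < r - 1), a i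
            + a ⟨r - 1, by omega⟩ ≤ s} := by
  exact rank_aux r s hs ⟨r - 1, by omega⟩ rfl
end
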